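/- arXiv:2510.06021 — 3 statements merged into one kernel-verified Lean document; each statement's English description precedes it below -/
import Mathlib

section
/- Let (K,v,σ) be a valued difference field containing a fixed point ε = σ(ε) of positive valuation, and an element a with v(a) = 0, σ²(a) = a, and res(σ(a)) ≠ res(a). Let P(X) = (X − a)(X − σ(a)) and Q(X,Y) = P(X)P(Y) − ε. Then Q has no zero (b₁,b₂) with both b₁ and b₂ in the fixed field of σ. -/
/-- Let `ε` be a fixed point of `σ` of positive valuation (multiplicatively
`v ε < 1`, `ε ≠ 0`) and `a` an element with `v a = 1`, `σ² a = a` and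
`res (σ a) ≠ res a`.  With `P(X) = (X - a)(X - σ a)` and
`Q(X,Y) = P(X)P(Y) - ε`, the polynomial `Q` has no zero with both coordinates
in the fixed field of `σ`. -/
theorem stmt7 {K k Γ₀ : Type*} [Field K] [Field k] [LinearOrderedCommGroupWithZero Γ₀]
    (v : Valuation K Γ₀) (σ : K ≃+* K)
    (hO : ∀ x : K, v (σ x) ≤ 1 ↔ v x ≤ 1)
    (res : v.valuationSubring →+* k)
    (hres : ∀ x y : v.valuationSubring, res x = res y ↔ v ((x : K) - (y : K)) < 1)
    (ε : K) (hε0 : ε ≠ 0) (hεfix : σ ε = ε) (hεpos : v ε < 1)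
    (a : K) (ha : v a = 1) (ha2 : σ (σ a) = a)
    (h1 : a ∈ v.valuationSubring) (h2 : σ a ∈ v.valuationSubring)
    (hne : res ⟨σ a, h2⟩ ≠ res ⟨a, h1⟩)
    (b₁ b₂ : K) (hb₁ : σ b₁ = b₁) (hb₂ : σ b₂ = b₂) :
    ((b₁ - a) * (b₁ - σ a)) * ((b₂ - a) * (b₂ - σ a)) - ε ≠ 0 := by
  -- σ preserves the maximal ideal as well
  have key : ∀ x : K, v (σ x) < 1 ↔ v x < 1 := by
    intro x
    rcases eq_or_ne x 0 with rfl | hx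
    · simp
    have hσx : σ x ≠ 0 := fun h => hx (by simpa using σ.injective (h.trans (map_zero σ).symm))
    have hvx : v x ≠ 0 := (Valuation.ne_zero_iff v).2 hx
    have hvσx : v (σ x) ≠ 0 := (Valuation.ne_zero_iff v).2 hσx
    have hinv : ∀ y : K, y ≠ 0 → (v y < 1 ↔ ¬ v y⁻¹ ≤ 1) := by
      intro y hy
      have hvy : v y ≠ 0 := (Valuation.ne_zero_iff v).2 hy
      rw [map_inv₀, not_le, one_lt_inv₀ (lt_of_le_of_ne (zero_le') (Ne.symm hvy))]
    rw [hinv _ hσx, hinv _ hx, ← map_inv₀ σ, hO]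
  -- if v (σ a - a) < 1 we get a contradiction with hne
  have hd : ¬ v (σ a - a) < 1 := fun h => hne ((hres ⟨σ a, h2⟩ ⟨a, h1⟩).2 h)
  -- for any fixed b, both factors have valuation ≥ 1
  have hfix : ∀ b : K, σ b = b → 1 ≤ v (b - a) ∧ 1 ≤ v (b - σ a) := by
    intro b hb
    have hσ1 : σ (b - a) = b - σ a := by rw [map_sub, hb]
    have hσ2 : σ (b - σ a) = b - a := by rw [map_sub, hb, ha2]
    constructor
    · by_contra h
      push_neg at h
      have h' : v (b - σ a) < 1 := by rw [← hσ1]; exact (key _).2 h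
      exact hd (lt_of_le_of_lt (by
        have : σ a - a = (b - a) - (b - σ a) := by ring
        rw [this]
        exact v.map_sub _ _) (max_lt h h'))
    · by_contra h
      push_neg at h
      have h' : v (b - a) < 1 := by rw [← hσ2]; exact (key _).2 h
      exact hd (lt_of_le_of_lt (by
        have : σ a - a = (b - a) - (b - σ a) := by ring
        rw [this]
        exact v.map_sub _ _) (max_lt h' h))
  intro hzero
  have heq : ((b₁ - a) * (b₁ - σ a)) * ((b₂ - a) * (b₂ - σ a)) = ε := by
    linear_combination hzero
  obtain ⟨c1, c2⟩ := hfix b₁ hb₁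
  obtain ⟨c3, c4⟩ := hfix b₂ hb₂
  have : (1 : Γ₀) ≤ v ε := by
    rw [← heq, map_mul, map_mul, map_mul]
    calc (1:Γ₀) = 1 * 1 * (1 * 1) := by simp
    _ ≤ _ := by gcongr <;> simp [zero_le']
  exact absurd hεpos (not_lt.2 this)
end

section
/- Let (K,v) be a valued field, I an ideal of K[x₁^{±1},…,x_n^{±1}], and γ ∈ Γⁿ. If γ is a tropical root of trop(f) for every f ∈ I (i.e. the minimum defining trop(f)(γ) is achieved at least twice, for every nonzero f ∈ I), then the initial ideal ini_γ(I) ⊆ k[x₁^{±1},…,x_n^{±1}] is a proper ideal; equivalently, no initial form ini_γ(f) for f ∈ I is a unit (a nonzero monomial). -/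
attribute [local instance] Classical.propDecidable

/-- The multiplicative weight `v(c_u)·⟨u,γ⟩` of the monomial of exponent `u` of the
Laurent polynomial `f` at the point `γ ∈ Γⁿ` (written multiplicatively, so that the
additive minimum becomes a multiplicative maximum). -/
noncomputable def tropWeight {K Γ₀ : Type*} [Field K]
    [LinearOrderedCommGroupWithZero Γ₀] {n : ℕ} (v : Valuation K Γ₀)
    (γ : Fin n → Γ₀ˣ) (f : AddMonoidAlgebra K (Fin n →₀ ℤ)) (u : Fin n →₀ ℤ) : Γ₀ :=
  v (f.coeff u) * ((∏ j : Fin n, γ j ^ (u j) : Γ₀ˣ) : Γ₀)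

/-- `γ` is a tropical root of `trop(f)`: the extremum of `v(c_u) + ⟨u,γ⟩` over the
support of `f` is attained at least twice. -/
def IsTropicalRoot {K Γ₀ : Type*} [Field K]
    [LinearOrderedCommGroupWithZero Γ₀] {n : ℕ} (v : Valuation K Γ₀)
    (γ : Fin n → Γ₀ˣ) (f : AddMonoidAlgebra K (Fin n →₀ ℤ)) : Prop :=
  ∃ u₁ ∈ f.coeff.support, ∃ u₂ ∈ f.coeff.support, u₁ ≠ u₂ ∧
    (∀ u' ∈ f.coeff.support, tropWeight v γ f u' ≤ tropWeight v γ f u₁) ∧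
    tropWeight v γ f u₂ = tropWeight v γ f u₁

/-- The initial form `ini_γ(f)` of a Laurent polynomial at `γ ∈ Γⁿ`. -/
noncomputable def iniAt {K k Γ₀ : Type*} [Field K] [Field k]
    [LinearOrderedCommGroupWithZero Γ₀] {n : ℕ}
    (v : Valuation K Γ₀) (s : Γ₀ →* K) (res : K → k) (γ : Fin n → Γ₀ˣ)
    (f : AddMonoidAlgebra K (Fin n →₀ ℤ)) : AddMonoidAlgebra k (Fin n →₀ ℤ) :=
  ∑ u ∈ f.coeff.support,
    if ∀ u' ∈ f.coeff.support, tropWeight v γ f u' ≤ tropWeight v γ f u then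
      AddMonoidAlgebra.single u (res (f.coeff u * (s (v (f.coeff u)))⁻¹))
    else 0

/-!
Let `W` be the largest weight of `f ≠ 0` at `γ`. After rescaling `f` by `s(W)⁻¹` all weights are
`≤ 1`, and `ini_γ(f)` is the coefficientwise residue of the tilted polynomial `∑ f_y s(γ^y) x^y`.
This reduction is additive, semilinear over the valuation ring and compatible with multiplication
by monomials, so the reductions of the elements of `I` whose weights are `≤ 1` form a vector space
over the residue subfield `k₀ = res(𝒪_v)` that is stable under monomials and contains every initial
form. If the initial forms generated the unit ideal, a `k₀`-linear projection `k → k₀` applied to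
the coefficients of a relation `1 = ∑ cᵢ ini_γ(fᵢ)` would exhibit `1` itself as the reduction of
some `G ∈ I`. Then the weight `1` of `G` is attained only at the exponent `0`, so `γ` is not a
tropical root of `G`.
-/

open AddMonoidAlgebra

theorem mem_of_mem_ideal_span_of_coeff_mem {k M : Type*} [Field k] [AddMonoid M]
    {k₀ : Subfield k} (N : Submodule k₀ k[M]) (hN : ∀ x ∈ N, ∀ m, x.coeff m ∈ k₀)
    (hsingle : ∀ m, ∀ x ∈ N, single m 1 * x ∈ N) {x : k[M]}
    (hx : x ∈ Ideal.span (N : Set k[M])) (hx₀ : ∀ m, x.coeff m ∈ k₀) : x ∈ N := by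
  -- `Ψ` applies a `k₀`-linear projection `k → k₀` to every coefficient; it fixes `x`, and
  -- `Ψ (c * y) ∈ N` for all `c` and all `y` in the ideal spanned by `N`.
  obtain ⟨π, hπ⟩ := (Algebra.linearMap k₀ k).exists_leftInverse_of_injective
    (LinearMap.ker_eq_bot.mpr (algebraMap k₀ k).injective)
  let P : k →ₗ[k₀] k := Algebra.linearMap k₀ k ∘ₗ π
  have hP_fix (a : k) (ha : a ∈ k₀) : P a = a :=
    congrArg Subtype.val (LinearMap.congr_fun hπ ⟨a, ha⟩)
  let Ψ : k[M] → k[M] := map P.toAddMonoidHom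
  have hΨ_add (y z : k[M]) : Ψ (y + z) = Ψ y + Ψ z := AddMonoidAlgebra.map_add _ y z
  have hΨ_fix (y : k[M]) (hy : ∀ m, y.coeff m ∈ k₀) : Ψ y = y := by
    ext m; simp [Ψ, hP_fix _ (hy m)]
  have hΨ_smul (r : k) (y : k[M]) (hy : ∀ m, y.coeff m ∈ k₀) : Ψ (r • y) = P r • y := by
    ext m
    have h := P.map_smul ⟨_, hy m⟩ r
    rw [Subfield.smul_def, Subfield.smul_def] at h
    simp only [Ψ, coeff_map, Finsupp.mapRange_apply, coeff_smul_apply, smul_eq_mul]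
    simpa [mul_comm] using h
  have hΨ_mul (c y : k[M]) (hy : y ∈ N) : Ψ (c * y) ∈ N := by
    induction c using AddMonoidAlgebra.induction_linear with
    | zero => simp [Ψ]
    | add c c' hc hc' => simpa [add_mul, hΨ_add] using N.add_mem hc hc'
    | single m r =>
      have hmy := hsingle m y hy
      rw [← mul_one r, ← smul_single', smul_mul_assoc, hΨ_smul r _ (hN _ hmy)]
      exact N.smul_mem ⟨P r, (π r).2⟩ hmy
  have hspan (y : k[M]) (hy : y ∈ Ideal.span (N : Set k[M])) (c : k[M]) : Ψ (c * y) ∈ N := by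
    induction hy using Submodule.span_induction generalizing c with
    | mem y hy => exact hΨ_mul c y hy
    | zero => simp [Ψ]
    | add y z _ _ hy hz => simpa [mul_add, hΨ_add] using N.add_mem (hy c) (hz c)
    | smul a y _ hy => simpa [← mul_assoc] using hy (c * a)
  simpa [hΨ_fix x hx₀] using hspan x hx 1

section ResidueMap

variable {K k Γ₀ : Type*} [Field K] [Field k] [LinearOrderedCommGroupWithZero Γ₀]

/-- A residue map `𝒪_v → k` on the valuation ring `𝒪_v = {b | v b ≤ 1}`, extended arbitrarily
to `K`. -/
structure IsResidueMap (v : Valuation K Γ₀) (res : K → k) : Prop where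
  map_of_lt_one : ∀ c, v c < 1 → res c = 0
  map_add : ∀ x y, v x ≤ 1 → v y ≤ 1 → res (x + y) = res x + res y
  map_mul : ∀ x y, v x ≤ 1 → v y ≤ 1 → res (x * y) = res x * res y
  map_one : res 1 = 1

namespace IsResidueMap

variable {v : Valuation K Γ₀} {res : K → k} (hres : IsResidueMap v res)
include hres

theorem map_zero : res 0 = 0 :=
  hres.map_of_lt_one 0 (by simp)

theorem map_mul_map_inv {b : K} (hb : v b = 1) : res b * res b⁻¹ = 1 := by
  have hb₀ : b ≠ 0 := by rintro rfl; simp at hb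
  rw [← hres.map_mul _ _ hb.le (by simp [hb]), mul_inv_cancel₀ hb₀, hres.map_one]

theorem map_ne_zero_iff {b : K} (hb : v b ≤ 1) : res b ≠ 0 ↔ v b = 1 := by
  refine ⟨fun h => hb.eq_of_not_lt fun hlt => h (hres.map_of_lt_one b hlt), fun h => ?_⟩
  exact left_ne_zero_of_mul_eq_one (hres.map_mul_map_inv h)

def ringHom : v.integer →+* k where
  toFun b := res b
  map_one' := hres.map_one
  map_mul' b c := hres.map_mul b c b.2 c.2
  map_zero' := hres.map_zero
  map_add' b c := hres.map_add b c b.2 c.2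

/-- `res` need not be onto `k`: the initial forms only have coefficients in this subfield. -/
def subfield : Subfield k where
  toSubring := hres.ringHom.range
  inv_mem' := by
    rintro _ ⟨b, rfl⟩
    by_cases h : res b = 0
    · simpa [ringHom, h] using ⟨0, by simp, hres.map_zero⟩
    · have hb : v b = 1 := (hres.map_ne_zero_iff b.2).mp h
      refine ⟨⟨(b : K)⁻¹, by simp [Valuation.mem_integer_iff, hb]⟩, ?_⟩
      show res (b : K)⁻¹ = (res b)⁻¹
      exact eq_inv_of_mul_eq_one_right (hres.map_mul_map_inv hb)

theorem mem_subfield {a : k} : a ∈ hres.subfield ↔ ∃ b, v b ≤ 1 ∧ res b = a :=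
  ⟨fun ⟨b, hb⟩ => ⟨b, b.2, hb⟩, fun ⟨b, hb, hba⟩ => ⟨⟨b, hb⟩, hba⟩⟩

end IsResidueMap

end ResidueMap

section LaurentPolynomial

variable {K k Γ₀ : Type*} [Field K] [Field k] [LinearOrderedCommGroupWithZero Γ₀] {n : ℕ}

def monomialValue (γ : Fin n → Γ₀ˣ) (u : Fin n →₀ ℤ) : Γ₀ˣ :=
  ∏ j, γ j ^ u j

theorem monomialValue_add (γ : Fin n → Γ₀ˣ) (u w : Fin n →₀ ℤ) :
    monomialValue γ (u + w) = monomialValue γ u * monomialValue γ w := by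
  simp [monomialValue, zpow_add, Finset.prod_mul_distrib]

section TropWeight

variable (v : Valuation K Γ₀) (γ : Fin n → Γ₀ˣ)

theorem tropWeight_eq (f : K[Fin n →₀ ℤ]) (u : Fin n →₀ ℤ) :
    tropWeight v γ f u = v (f.coeff u) * monomialValue γ u :=
  rfl

theorem tropWeight_smul (c : K) (f : K[Fin n →₀ ℤ]) (u : Fin n →₀ ℤ) :
    tropWeight v γ (c • f) u = v c * tropWeight v γ f u := by
  simp [tropWeight_eq, mul_assoc]

theorem tropWeight_single_mul (u : Fin n →₀ ℤ) (c : K) (g : K[Fin n →₀ ℤ]) (y : Fin n →₀ ℤ) :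
    tropWeight v γ (single u c * g) y =
      v c * monomialValue γ u * tropWeight v γ g (-u + y) := by
  conv_lhs => rw [tropWeight_eq, ← add_neg_cancel_left u y, monomialValue_add]
  simp [tropWeight_eq, coeff_single_mul_apply, mul_mul_mul_comm]

theorem tropWeight_ne_zero_iff {f : K[Fin n →₀ ℤ]} {u : Fin n →₀ ℤ} :
    tropWeight v γ f u ≠ 0 ↔ u ∈ f.coeff.support := by
  simp [tropWeight_eq]

theorem exists_forall_tropWeight_le {f : K[Fin n →₀ ℤ]} (hf : f ≠ 0) :
    ∃ u₀ ∈ f.coeff.support, ∀ u, tropWeight v γ f u ≤ tropWeight v γ f u₀ := by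
  obtain ⟨u₀, hu₀, hmax⟩ := f.coeff.support.exists_max_image (tropWeight v γ f)
    (Finsupp.support_nonempty_iff.mpr (by simpa using hf))
  refine ⟨u₀, hu₀, fun u => ?_⟩
  by_cases hu : u ∈ f.coeff.support
  · exact hmax u hu
  · simp [tropWeight_eq, Finsupp.notMem_support_iff.mp hu]

/-- `trop(g)(γ) ≥ 0` in the additive notation of the paper. -/
def TropNonneg (g : K[Fin n →₀ ℤ]) : Prop :=
  ∀ y, tropWeight v γ g y ≤ 1

variable {v γ}

theorem TropNonneg.zero : TropNonneg v γ (0 : K[Fin n →₀ ℤ]) := by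
  simp [TropNonneg, tropWeight_eq]

theorem TropNonneg.add {f g : K[Fin n →₀ ℤ]} (hf : TropNonneg v γ f) (hg : TropNonneg v γ g) :
    TropNonneg v γ (f + g) := fun y =>
  calc tropWeight v γ (f + g) y
      ≤ max (v (f.coeff y)) (v (g.coeff y)) * monomialValue γ y :=
        mul_le_mul_left (v.map_add _ _) _
    _ = max (tropWeight v γ f y) (tropWeight v γ g y) := (max_mul_mul_right _ _ _).symm
    _ ≤ 1 := max_le (hf y) (hg y)

theorem TropNonneg.smul {g : K[Fin n →₀ ℤ]} (hg : TropNonneg v γ g) {b : K} (hb : v b ≤ 1) :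
    TropNonneg v γ (b • g) := fun y => by
  simpa [tropWeight_smul] using mul_le_one' hb (hg y)

theorem TropNonneg.single_mul {g : K[Fin n →₀ ℤ]} (hg : TropNonneg v γ g) {u : Fin n →₀ ℤ}
    {c : K} (hc : v c * monomialValue γ u ≤ 1) : TropNonneg v γ (single u c * g) := fun y => by
  simpa [tropWeight_single_mul] using mul_le_one' hc (hg (-u + y))

end TropWeight

variable {v : Valuation K Γ₀} {s : Γ₀ →* K} {res : K → k} {γ : Fin n → Γ₀ˣ}

theorem valuation_coeff_mul_monomialValue (hs : ∀ g, v (s g) = g) (f : K[Fin n →₀ ℤ])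
    (u : Fin n →₀ ℤ) : v (f.coeff u * s (monomialValue γ u)) = tropWeight v γ f u := by
  rw [v.map_mul, hs, tropWeight_eq]

theorem tropNonneg_inv_smul {f : K[Fin n →₀ ℤ]} {u₀ : Fin n →₀ ℤ}
    (hs : ∀ g, v (s g) = g) (hu₀ : u₀ ∈ f.coeff.support)
    (hmax : ∀ u, tropWeight v γ f u ≤ tropWeight v γ f u₀) :
    TropNonneg v γ ((s (tropWeight v γ f u₀))⁻¹ • f) := fun u => by
  have hW : tropWeight v γ f u₀ ≠ 0 := (tropWeight_ne_zero_iff v γ).mpr hu₀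
  rw [tropWeight_smul, map_inv₀, hs, inv_mul_le_iff₀ (zero_lt_iff.mpr hW), mul_one]
  exact hmax u

variable (s res γ) in
/-- The residue of the tilted polynomial `∑ g_y s(γ^y) x^y`, meaningful when `TropNonneg v γ g`,
i.e. when all `g_y s(γ^y)` lie in the valuation ring. -/
noncomputable def reduction (g : K[Fin n →₀ ℤ]) : k[Fin n →₀ ℤ] :=
  ∑ y ∈ g.coeff.support, single y (res (g.coeff y * s (monomialValue γ y)))

theorem coeff_reduction (hres : IsResidueMap v res) (g : K[Fin n →₀ ℤ]) (y : Fin n →₀ ℤ) :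
    (reduction s res γ g).coeff y = res (g.coeff y * s (monomialValue γ y)) := by
  by_cases hy : y ∈ g.coeff.support
  · simp [reduction, coeff_sum, Finsupp.single_apply, hy]
  · simp [reduction, coeff_sum, Finsupp.single_apply, hy, Finsupp.notMem_support_iff.mp hy,
      hres.map_zero]

theorem reduction_zero : reduction s res γ (0 : K[Fin n →₀ ℤ]) = 0 := by
  simp [reduction]

section Reduction

variable (hs : ∀ g, v (s g) = g) (hres : IsResidueMap v res)
include hs hres

theorem reduction_add {f g : K[Fin n →₀ ℤ]} (hf : TropNonneg v γ f) (hg : TropNonneg v γ g) :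
    reduction s res γ (f + g) = reduction s res γ f + reduction s res γ g := by
  ext y
  simp only [coeff_add, Finsupp.add_apply, coeff_reduction hres, add_mul]
  exact hres.map_add _ _ ((valuation_coeff_mul_monomialValue hs f y).trans_le (hf y))
    ((valuation_coeff_mul_monomialValue hs g y).trans_le (hg y))

theorem reduction_smul {g : K[Fin n →₀ ℤ]} (hg : TropNonneg v γ g) {b : K} (hb : v b ≤ 1) :
    reduction s res γ (b • g) = res b • reduction s res γ g := by
  ext y
  simp only [coeff_smul_apply, smul_eq_mul, coeff_reduction hres, mul_assoc]
  exact hres.map_mul _ _ hb ((valuation_coeff_mul_monomialValue hs g y).trans_le (hg y))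

theorem coeff_reduction_mem_subfield {g : K[Fin n →₀ ℤ]} (hg : TropNonneg v γ g)
    (y : Fin n →₀ ℤ) : (reduction s res γ g).coeff y ∈ hres.subfield :=
  hres.mem_subfield.mpr ⟨_, (valuation_coeff_mul_monomialValue hs g y).trans_le (hg y),
    (coeff_reduction hres g y).symm⟩

theorem tropWeight_eq_one_iff {g : K[Fin n →₀ ℤ]} (hg : TropNonneg v γ g) (y : Fin n →₀ ℤ) :
    tropWeight v γ g y = 1 ↔ (reduction s res γ g).coeff y ≠ 0 := by
  rw [coeff_reduction hres, hres.map_ne_zero_iff, valuation_coeff_mul_monomialValue hs]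
  exact (valuation_coeff_mul_monomialValue hs g y).trans_le (hg y)

omit hs in
theorem reduction_single_mul (u : Fin n →₀ ℤ) (g : K[Fin n →₀ ℤ]) :
    reduction s res γ (single u (s (monomialValue γ u))⁻¹ * g) =
      single u 1 * reduction s res γ g := by
  ext y
  have hsu : s (monomialValue γ u) ≠ 0 := (Units.map s (monomialValue γ u)).ne_zero
  rw [coeff_reduction hres, coeff_single_mul_apply, coeff_single_mul_apply, coeff_reduction hres,
    ← add_neg_cancel_left u y, monomialValue_add, Units.val_mul, map_mul, neg_add_cancel_left]
  field_simp

theorem iniAt_eq_reduction_smul {f : K[Fin n →₀ ℤ]} {u₀ : Fin n →₀ ℤ}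
    (hu₀ : u₀ ∈ f.coeff.support) (hmax : ∀ u, tropWeight v γ f u ≤ tropWeight v γ f u₀) :
    iniAt v s res γ f = reduction s res γ ((s (tropWeight v γ f u₀))⁻¹ • f) := by
  set W := tropWeight v γ f u₀
  have hW : W ≠ 0 := (tropWeight_ne_zero_iff v γ).mpr hu₀
  have hsupp : ((s W)⁻¹ • f).coeff.support = f.coeff.support :=
    Finsupp.support_smul_eq (inv_ne_zero fun h => hW (by rw [← hs W, h, v.map_zero]))
  rw [iniAt, reduction, hsupp]
  refine Finset.sum_congr rfl fun u hu => ?_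
  split_ifs with hum
  · have hWu : tropWeight v γ f u = W := le_antisymm (hmax u) (hum u₀ hu₀)
    have hvu : v (f.coeff u) ≠ 0 := by simpa using hu
    have hsv : s (v (f.coeff u)) ≠ 0 := fun h => hvu (by rw [← hs (v _), h, v.map_zero])
    have hsγ : s (monomialValue γ u) ≠ 0 := (Units.map s (monomialValue γ u)).ne_zero
    rw [coeff_smul_apply, smul_eq_mul, ← hWu, tropWeight_eq, map_mul]
    congr 2
    field_simp
  · obtain ⟨u', -, hlt⟩ := not_forall₂.mp hum
    have hsmall : v (((s W)⁻¹ • f).coeff u * s (monomialValue γ u)) < 1 := by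
      rw [valuation_coeff_mul_monomialValue hs, tropWeight_smul, map_inv₀, hs]
      calc W⁻¹ * tropWeight v γ f u < W⁻¹ * W :=
            mul_lt_mul_of_pos_left ((not_le.mp hlt).trans_le (hmax u'))
              (zero_lt_iff.mpr (inv_ne_zero hW))
        _ = 1 := inv_mul_cancel₀ hW
    rw [hres.map_of_lt_one _ hsmall, single_zero]

theorem not_isTropicalRoot_of_reduction_eq_single {g : K[Fin n →₀ ℤ]} (hg : TropNonneg v γ g)
    {u : Fin n →₀ ℤ} {a : k} (ha : a ≠ 0) (hred : reduction s res γ g = single u a) :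
    ¬ IsTropicalRoot v γ g := by
  rintro ⟨u₁, -, u₂, -, hne, hmax, heq⟩
  have hweight_one (w : Fin n →₀ ℤ) : tropWeight v γ g w = 1 ↔ w = u := by
    rw [tropWeight_eq_one_iff hs hres hg, hred, coeff_single, Finsupp.single_apply,
      ite_ne_right_iff]
    exact ⟨fun h => h.1.symm, fun h => ⟨h.symm, ha⟩⟩
  have hu : u ∈ g.coeff.support :=
    (tropWeight_ne_zero_iff v γ).mp (((hweight_one u).mpr rfl).symm ▸ one_ne_zero)
  have h₁ : tropWeight v γ g u₁ = 1 := le_antisymm (hg u₁) ((hweight_one u).mpr rfl ▸ hmax u hu)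
  exact hne (((hweight_one u₁).mp h₁).trans ((hweight_one u₂).mp (heq.trans h₁)).symm)

variable (γ) in
def reductionSubmodule (I : Ideal K[Fin n →₀ ℤ]) : Submodule hres.subfield k[Fin n →₀ ℤ] where
  carrier := reduction s res γ '' {g | g ∈ I ∧ TropNonneg v γ g}
  zero_mem' := ⟨0, ⟨I.zero_mem, TropNonneg.zero⟩, reduction_zero⟩
  add_mem' := by
    rintro _ _ ⟨f, ⟨hfI, hf⟩, rfl⟩ ⟨g, ⟨hgI, hg⟩, rfl⟩
    exact ⟨f + g, ⟨I.add_mem hfI hgI, hf.add hg⟩, reduction_add hs hres hf hg⟩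
  smul_mem' := by
    rintro ⟨_, ha⟩ _ ⟨g, ⟨hgI, hg⟩, rfl⟩
    obtain ⟨b, hb, rfl⟩ := hres.mem_subfield.mp ha
    exact ⟨b • g, ⟨I.smul_of_tower_mem b hgI, hg.smul hb⟩, reduction_smul hs hres hg hb⟩

variable {I : Ideal K[Fin n →₀ ℤ]}

theorem coeff_mem_subfield_of_mem_reductionSubmodule {x : k[Fin n →₀ ℤ]}
    (hx : x ∈ reductionSubmodule γ hs hres I) (y : Fin n →₀ ℤ) : x.coeff y ∈ hres.subfield := by
  obtain ⟨g, ⟨-, hg⟩, rfl⟩ := hx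
  exact coeff_reduction_mem_subfield hs hres hg y

theorem single_one_mul_mem_reductionSubmodule (u : Fin n →₀ ℤ) {x : k[Fin n →₀ ℤ]}
    (hx : x ∈ reductionSubmodule γ hs hres I) :
    single u 1 * x ∈ reductionSubmodule γ hs hres I := by
  obtain ⟨g, ⟨hgI, hg⟩, rfl⟩ := hx
  refine ⟨_, ⟨I.mul_mem_left _ hgI, hg.single_mul ?_⟩, reduction_single_mul hres u g⟩
  rw [map_inv₀, hs, inv_mul_cancel₀ (Units.ne_zero _)]

theorem iniAt_mem_reductionSubmodule {f : K[Fin n →₀ ℤ]} (hf : f ∈ I) :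
    iniAt v s res γ f ∈ reductionSubmodule γ hs hres I := by
  rcases eq_or_ne f 0 with rfl | hf₀
  · simp [iniAt]
  obtain ⟨u₀, hu₀, hmax⟩ := exists_forall_tropWeight_le v γ hf₀
  rw [iniAt_eq_reduction_smul hs hres hu₀ hmax]
  exact ⟨_, ⟨I.smul_of_tower_mem _ hf, tropNonneg_inv_smul hs hu₀ hmax⟩, rfl⟩

end Reduction

end LaurentPolynomial

theorem stmt17_general {K k Γ₀ : Type*} [Field K] [Field k]
    [LinearOrderedCommGroupWithZero Γ₀] {n : ℕ}
    (v : Valuation K Γ₀) (s : Γ₀ →* K) (hs : ∀ γ : Γ₀, v (s γ) = γ)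
    (res : K → k)
    (hres_small : ∀ c : K, v c < 1 → res c = 0)
    (hres_add : ∀ x y : K, v x ≤ 1 → v y ≤ 1 → res (x + y) = res x + res y)
    (hres_mul : ∀ x y : K, v x ≤ 1 → v y ≤ 1 → res (x * y) = res x * res y)
    (hres_one : res 1 = 1)
    (I : Ideal (AddMonoidAlgebra K (Fin n →₀ ℤ))) (γ : Fin n → Γ₀ˣ)
    (hroot : ∀ f ∈ I, f ≠ 0 → IsTropicalRoot v γ f) :
    Ideal.span (iniAt v s res γ '' (I : Set (AddMonoidAlgebra K (Fin n →₀ ℤ)))) ≠ ⊤ := by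
  have hres : IsResidueMap v res := ⟨hres_small, hres_add, hres_mul, hres_one⟩
  let N := reductionSubmodule γ hs hres I
  intro htop
  have hini : iniAt v s res γ '' I ⊆ N := by
    rintro _ ⟨f, hf, rfl⟩
    exact iniAt_mem_reductionSubmodule hs hres hf
  have hone : (1 : k[Fin n →₀ ℤ]) ∈ N := by
    refine mem_of_mem_ideal_span_of_coeff_mem N
      (fun _ hx => coeff_mem_subfield_of_mem_reductionSubmodule hs hres hx)
      (fun u _ hx => single_one_mul_mem_reductionSubmodule hs hres u hx)
      (Ideal.span_mono hini (htop ▸ Submodule.mem_top)) fun u => ?_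
    rw [one_def, coeff_single, Finsupp.single_apply]
    split_ifs <;> simp
  obtain ⟨G, ⟨hGI, hG⟩, hGone⟩ := hone
  have hG₀ : G ≠ 0 := by
    rintro rfl
    exact zero_ne_one (reduction_zero.symm.trans hGone)
  rw [one_def] at hGone
  exact not_isTropicalRoot_of_reduction_eq_single hs hres hG one_ne_zero hGone (hroot G hGI hG₀)

/-- If `γ` is a tropical root of every nonzero `f ∈ I`, then the initial ideal
`ini_γ(I)` is a proper ideal of `k[x₁^{±1},…,x_n^{±1}]`. -/
theorem stmt17 {K k Γ₀ : Type*} [Field K] [Field k]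
    [LinearOrderedCommGroupWithZero Γ₀] {n : ℕ}
    (v : Valuation K Γ₀) (s : Γ₀ →* K) (hs : ∀ γ : Γ₀, v (s γ) = γ)
    (res : K → k) (hres0 : res 0 = 0)
    (hres_small : ∀ c : K, v c < 1 → res c = 0)
    (hres_add : ∀ x y : K, v x ≤ 1 → v y ≤ 1 → res (x + y) = res x + res y)
    (hres_mul : ∀ x y : K, v x ≤ 1 → v y ≤ 1 → res (x * y) = res x * res y)
    (hres_one : res 1 = 1)
    (I : Ideal (AddMonoidAlgebra K (Fin n →₀ ℤ))) (γ : Fin n → Γ₀ˣ)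
    (hroot : ∀ f ∈ I, f ≠ 0 → IsTropicalRoot v γ f) :
    Ideal.span (iniAt v s res γ '' (I : Set (AddMonoidAlgebra K (Fin n →₀ ℤ)))) ≠ ⊤ :=
  stmt17_general v s hs res hres_small hres_add hres_mul hres_one I γ hroot
end

section
/- Let Γ be an ordered abelian group and let f = min_{i≤ℓ}(γ_i + ⟨u_i, x⟩) be a tropical polynomial with u_i ∈ ℤⁿ, γ_i ∈ Γ. If z ∈ (K^×)ⁿ satisfies ∑_i c_i z^{u_i} = 0 in a valued field K with v(c_i) = γ_i, then v(z) = (v(z₁),…,v(z_n)) is a tropical root of f, i.e. the minimum min_i (γ_i + ⟨u_i, v(z)⟩) is attained at least twice. -/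
/-- If `z ∈ (K^×)ⁿ` satisfies `∑ᵢ cᵢ z^{uᵢ} = 0` with all `cᵢ ≠ 0`, then `v(z)` is a
tropical root of the tropical polynomial `min_{i≤ℓ}(v(cᵢ) + ⟨uᵢ, x⟩)`: the extremum
of `v(cᵢ) + ⟨uᵢ, v z⟩` is attained at least twice.  (The value group is written
multiplicatively, so the additive minimum becomes a multiplicative maximum.) -/
theorem stmt18 {K Γ₀ : Type*} [Field K] [LinearOrderedCommGroupWithZero Γ₀]
    (v : Valuation K Γ₀) (n ℓ : ℕ)
    (c : Fin (ℓ + 1) → K) (hc : ∀ i, c i ≠ 0)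
    (u : Fin (ℓ + 1) → Fin n → ℤ) (z : Fin n → Kˣ)
    (hz : ∑ i : Fin (ℓ + 1), c i * ∏ j : Fin n, ((z j : K) ^ (u i j)) = 0) :
    ∃ i j : Fin (ℓ + 1), i ≠ j ∧
      (∀ l : Fin (ℓ + 1), v (c l) * ∏ j' : Fin n, v ((z j' : K)) ^ (u l j') ≤
        v (c i) * ∏ j' : Fin n, v ((z j' : K)) ^ (u i j')) ∧
      v (c j) * ∏ j' : Fin n, v ((z j' : K)) ^ (u j j') =
        v (c i) * ∏ j' : Fin n, v ((z j' : K)) ^ (u i j') := by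
  set t : Fin (ℓ + 1) → K := fun i => c i * ∏ j : Fin n, ((z j : K) ^ (u i j)) with ht
  have hval : ∀ i, v (t i) = v (c i) * ∏ j' : Fin n, v ((z j' : K)) ^ (u i j') := by
    intro i
    simp only [ht, map_mul, map_prod, map_zpow₀]
  have htne : ∀ i, t i ≠ 0 := by
    intro i
    refine mul_ne_zero (hc i) (Finset.prod_ne_zero_iff.2 fun j _ => ?_)
    exact zpow_ne_zero _ (Units.ne_zero (z j))
  -- pick i maximizing v (t i)
  obtain ⟨i, _, hi⟩ := Finset.exists_max_image Finset.univ (fun i => v (t i))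
    ⟨0, Finset.mem_univ 0⟩
  by_cases hex : ∃ j, j ≠ i ∧ v (t j) = v (t i)
  · obtain ⟨j, hji, hj⟩ := hex
    refine ⟨i, j, fun h => hji (h ▸ rfl), fun l => ?_, ?_⟩
    · rw [← hval, ← hval]; exact hi l (Finset.mem_univ l)
    · rw [← hval, ← hval]; exact hj
  · exfalso
    push_neg at hex
    have hlt : ∀ j ∈ (Finset.univ : Finset (Fin (ℓ + 1))).erase i, v (t j) < v (t i) := by
      intro j hj
      exact lt_of_le_of_ne (hi j (Finset.mem_univ j))
        (hex j (Finset.mem_erase.1 hj).1)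
    have h0 : v (t i) ≠ 0 := v.ne_zero_iff.2 (htne i)
    have hsum : v (∑ j : Fin (ℓ + 1), t j) = v (t i) := by
      rw [← Finset.add_sum_erase _ t (Finset.mem_univ i)]
      exact v.map_add_eq_of_lt_left (v.map_sum_lt h0 hlt)
    rw [hz, map_zero] at hsum
    exact h0 hsum.symm
end
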